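/- Let m₁, m₂ > 0 and let φ : ℝ → ℝ be C⁶ with φ′(α) ≤ −m₁ < 0 and |φ^{(k)}(α)| ≤ m₂ for all α and 1 ≤ k ≤ 6. Then there exist a₀ > 0 and C > 0, depending only on m₁ and m₂, such that for all α ∈ ℝ and all a ∈ (0, a₀]: | a²·( 1/(φ(α−a) − φ(α))³ − 1/(φ(α) − φ(α+a))³ ) − ( −3 φ″(α)/φ′(α)⁴ ) − v₃(α)·a² | ≤ C·a⁴, where v₃(α) := ( −(5/2) φ″(α)³ − (1/4) φ′(α)² φ⁗(α) + 2 φ′(α) φ″(α) φ‴(α) ) / φ′(α)⁶. -/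
import Mathlib

set_option maxHeartbeats 1600000

open Real Filter Topology Set

/-- The second-order coefficient
`v₃ = (−(5/2)φ″³ − (1/4)φ′²φ⁗ + 2φ′φ″φ‴)/φ′⁶`. -/
noncomputable def v3coef (φ : ℝ → ℝ) (α : ℝ) : ℝ :=
  (-(5 / 2) * (iteratedDeriv 2 φ α) ^ 3
    - (1 / 4) * (deriv φ α) ^ 2 * iteratedDeriv 4 φ α
    + 2 * deriv φ α * iteratedDeriv 2 φ α * iteratedDeriv 3 φ α) / (deriv φ α) ^ 6

noncomputable def Qc0 (a c1 c2 c3 c4 c5 : ℝ) : ℝ :=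
  (((-42 : ℝ)) * c1^4 * c2^5) + ((120 : ℝ) * c1^5 * c2^3 * c3) + (((-60 : ℝ)) * c1^6 * c2 * c3^2) + (((-60 : ℝ)) * c1^6 * c2^2 * c4) + ((24 : ℝ) * c1^7 * c3 * c4) + ((24 : ℝ) * c1^7 * c2 * c5) + ((54 : ℝ) * a^2 * c1^2 * c2^7) + (((-276 : ℝ)) * a^2 * c1^3 * c2^5 * c3) + ((480 : ℝ) * a^2 * c1^4 * c2^3 * c3^2) + (((-30 : ℝ)) * a^2 * c1^4 * c2^4 * c4) + (((-240 : ℝ)) * a^2 * c1^5 * c2 * c3^3) + (((-72 : ℝ)) * a^2 * c1^5 * c2^2 * c3 * c4) + ((48 : ℝ) * a^2 * c1^5 * c2^3 * c5) + ((84 : ℝ) * a^2 * c1^6 * c3^2 * c4) + (((-60 : ℝ)) * a^2 * c1^6 * c2 * c4^2) + ((24 : ℝ) * a^2 * c1^6 * c2 * c3 * c5) + ((24 : ℝ) * a^2 * c1^7 * c4 * c5) + (((-20 : ℝ)) * a^4 * c2^9) + ((144 : ℝ) * a^4 * c1 * c2^7 * c3) + (((-486 : ℝ)) * a^4 * c1^2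 * c2^5 * c3^2) + ((198 : ℝ) * a^4 * c1^2 * c2^6 * c4) + ((760 : ℝ) * a^4 * c1^3 * c2^3 * c3^3) + (((-588 : ℝ)) * a^4 * c1^3 * c2^4 * c3 * c4) + (((-204 : ℝ)) * a^4 * c1^3 * c2^5 * c5) + (((-390 : ℝ)) * a^4 * c1^4 * c2 * c3^4)

noncomputable def Qc1 (a c1 c2 c3 c4 c5 : ℝ) : ℝ :=
  ((252 : ℝ) * a^4 * c1^4 * c2^2 * c3^2 * c4) + ((120 : ℝ) * a^4 * c1^4 * c2^3 * c4^2) + ((672 : ℝ) * a^4 * c1^4 * c2^3 * c3 * c5) + ((120 : ℝ) * a^4 * c1^5 * c3^3 * c4) + (((-144 : ℝ)) * a^4 * c1^5 * c2 * c3 * c4^2) + (((-360 : ℝ)) * a^4 * c1^5 * c2 * c3^2 * c5) + (((-216 : ℝ)) * a^4 * c1^5 * c2^2 * c4 * c5) + (((-20 : ℝ)) * a^4 * c1^6 * c4^3) + ((168 : ℝ) * a^4 * c1^6 * c3 * c4 * c5) + ((84 : ℝ) * a^4 * c1^6 * c2 * c5^2) + ((60 : ℝ) * a^6 * c2^7 *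 c3^2) + (((-120 : ℝ)) * a^6 * c2^8 * c4) + (((-312 : ℝ)) * a^6 * c1 * c2^5 * c3^3) + ((624 : ℝ) * a^6 * c1 * c2^6 * c3 * c4) + ((120 : ℝ) * a^6 * c1 * c2^7 * c5) + ((570 : ℝ) * a^6 * c1^2 * c2^3 * c3^4) + (((-1206 : ℝ)) * a^6 * c1^2 * c2^4 * c3^2 * c4) + ((234 : ℝ) * a^6 * c1^2 * c2^5 * c4^2) + (((-828 : ℝ)) * a^6 * c1^2 * c2^5 * c3 * c5) + (((-324 : ℝ)) * a^6 * c1^3 * c2 * c3^5) + ((648 : ℝ) * a^6 * c1^3 * c2^2 * c3^3 * c4) + (((-312 : ℝ)) * a^6 * c1^3 * c2^3 * c3 * c4^2) + ((1848 : ℝ) * a^6 * c1^3 * c2^3 * c3^2 * c5) + (((-300 : ℝ)) * a^6 * c1^3 * c2^4 * c4 * c5) + ((90 : ℝ) * a^6 * c1^4 * c3^4 * c4)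

noncomputable def Qc2 (a c1 c2 c3 c4 c5 : ℝ) : ℝ :=
  (((-36 : ℝ)) * a^6 * c1^4 * c2 * c3^2 * c4^2) + (((-1080 : ℝ)) * a^6 * c1^4 * c2 * c3^3 * c5) + ((180 : ℝ) * a^6 * c1^4 * c2^2 * c4^3) + (((-72 : ℝ)) * a^6 * c1^4 * c2^2 * c3 * c4 * c5) + ((192 : ℝ) * a^6 * c1^4 * c2^3 * c5^2) + (((-72 : ℝ)) * a^6 * c1^5 * c3 * c4^3) + ((360 : ℝ) * a^6 * c1^5 * c3^2 * c4 * c5) + (((-216 : ℝ)) * a^6 * c1^5 * c2 * c4^2 * c5) + ((84 : ℝ) * a^6 * c1^6 * c4 * c5^2) + (((-60 : ℝ)) * a^8 * c2^5 * c3^4) + ((240 : ℝ) * a^8 * c2^6 * c3^2 * c4) + (((-300 : ℝ)) * a^8 * c2^7 * c4^2) + ((120 : ℝ) * a^8 * c2^7 * c3 * c5) + ((192 : ℝ) * a^8 * c1 * c2^3 * c3^5) + (((-768 : ℝ)) * a^8 * c1 * c2^4 * c3^3 * c4) + ((1080 : ℝ) * a^8 * c1 * c2^5 * c3 * c4^2)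 + (((-864 : ℝ)) * a^8 * c1 * c2^5 * c3^2 * c5) + ((480 : ℝ) * a^8 * c1 * c2^6 * c4 * c5) + (((-138 : ℝ)) * a^8 * c1^2 * c2 * c3^6) + ((522 : ℝ) * a^8 * c1^2 * c2^2 * c3^4 * c4) + (((-1044 : ℝ)) * a^8 * c1^2 * c2^3 * c3^2 * c4^2) + ((1992 : ℝ) * a^8 * c1^2 * c2^3 * c3^3 * c5) + ((30 : ℝ) * a^8 * c1^2 * c2^4 * c4^3) + (((-1836 : ℝ)) * a^8 * c1^2 * c2^4 * c3 * c4 * c5) + (((-342 : ℝ)) * a^8 * c1^2 * c2^5 * c5^2)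

noncomputable def Qc3 (a c1 c2 c3 c4 c5 : ℝ) : ℝ :=
  ((36 : ℝ) * a^8 * c1^3 * c3^5 * c4) + ((216 : ℝ) * a^8 * c1^3 * c2 * c3^3 * c4^2) + (((-1260 : ℝ)) * a^8 * c1^3 * c2 * c3^4 * c5) + ((72 : ℝ) * a^8 * c1^3 * c2^2 * c3 * c4^3) + ((1080 : ℝ) * a^8 * c1^3 * c2^2 * c3^2 * c4 * c5) + ((120 : ℝ) * a^8 * c1^3 * c2^3 * c4^2 * c5) + ((1416 : ℝ) * a^8 * c1^3 * c2^3 * c3 * c5^2) + (((-108 : ℝ)) * a^8 * c1^4 * c3^2 * c4^3) + ((360 : ℝ) * a^8 * c1^4 * c3^3 * c4 * c5) + ((90 : ℝ) * a^8 * c1^4 * c2 * c4^4) + (((-360 : ℝ)) * a^8 * c1^4 * c2 * c3 * c4^2 * c5) + (((-900 : ℝ)) * a^8 * c1^4 * c2 * c3^2 * c5^2) + (((-324 : ℝ)) * a^8 * c1^4 * c2^2 * c4 * c5^2) + (((-72 : ℝ)) * a^8 * c1^5 * c4^3 * c5) + ((360 : ℝ) * a^8 * c1^5 * c3 * c4 *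 c5^2) + ((120 : ℝ) * a^8 * c1^5 * c2 * c5^3) + ((20 : ℝ) * a^10 * c2^3 * c3^6) + (((-120 : ℝ)) * a^10 * c2^4 * c3^4 * c4) + ((360 : ℝ) * a^10 * c2^5 * c3^2 * c4^2) + (((-240 : ℝ)) * a^10 * c2^5 * c3^3 * c5) + (((-400 : ℝ)) * a^10 * c2^6 * c4^3) + ((480 : ℝ) * a^10 * c2^6 * c3 * c4 * c5) + ((60 : ℝ) * a^10 * c2^7 * c5^2) + (((-24 : ℝ)) * a^10 * c1 * c2 * c3^7) + ((144 : ℝ) * a^10 * c1 * c2^2 * c3^5 * c4)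

noncomputable def Qc4 (a c1 c2 c3 c4 c5 : ℝ) : ℝ :=
  (((-672 : ℝ)) * a^10 * c1 * c2^3 * c3^3 * c4^2) + ((888 : ℝ) * a^10 * c1 * c2^3 * c3^4 * c5) + ((960 : ℝ) * a^10 * c1 * c2^4 * c3 * c4^3) + (((-2016 : ℝ)) * a^10 * c1 * c2^4 * c3^2 * c4 * c5) + ((720 : ℝ) * a^10 * c1 * c2^5 * c4^2 * c5) + (((-792 : ℝ)) * a^10 * c1 * c2^5 * c3 * c5^2) + ((6 : ℝ) * a^10 * c1^2 * c3^6 * c4) + ((234 : ℝ) * a^10 * c1^2 * c2 * c3^4 * c4^2) + (((-684 : ℝ)) * a^10 * c1^2 * c2 * c3^5 * c5) + (((-396 : ℝ)) * a^10 * c1^2 * c2^2 * c3^2 * c4^3) + ((1512 : ℝ) * a^10 * c1^2 * c2^2 * c3^3 * c4 * c5) + (((-150 : ℝ)) * a^10 * c1^2 * c2^3 * c4^4) + (((-1224 : ℝ)) * a^10 * c1^2 * c2^3 * c3 * c4^2 * c5) + ((2556 : ℝ) * a^10 * c1^2 * c2^3 * c3^2 * c5^2) + (((-630 : ℝ)) *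 a^10 * c1^2 * c2^4 * c4 * c5^2) + (((-72 : ℝ)) * a^10 * c1^3 * c3^3 * c4^3) + ((180 : ℝ) * a^10 * c1^3 * c3^4 * c4 * c5) + ((108 : ℝ) * a^10 * c1^3 * c2 * c3 * c4^4) + ((216 : ℝ) * a^10 * c1^3 * c2 * c3^2 * c4^2 * c5) + (((-1800 : ℝ)) * a^10 * c1^3 * c2 * c3^3 * c5^2) + ((360 : ℝ) * a^10 * c1^3 * c2^2 * c4^3 * c5) + ((216 : ℝ) * a^10 * c1^3 * c2^2 * c3 * c4 * c5^2) + ((328 : ℝ) * a^10 * c1^3 * c2^3 * c5^3) + ((18 : ℝ) * a^10 * c1^4 * c4^5) + (((-216 : ℝ)) * a^10 * c1^4 * c3 * c4^3 * c5)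

noncomputable def Qc5 (a c1 c2 c3 c4 c5 : ℝ) : ℝ :=
  ((540 : ℝ) * a^10 * c1^4 * c3^2 * c4 * c5^2) + (((-324 : ℝ)) * a^10 * c1^4 * c2 * c4^2 * c5^2) + (((-120 : ℝ)) * a^10 * c1^4 * c2 * c3 * c5^3) + ((120 : ℝ) * a^10 * c1^5 * c4 * c5^3) + (((-60 : ℝ)) * a^12 * c2^3 * c3^4 * c4^2) + ((120 : ℝ) * a^12 * c2^3 * c3^5 * c5) + ((240 : ℝ) * a^12 * c2^4 * c3^2 * c4^3) + (((-480 : ℝ)) * a^12 * c2^4 * c3^3 * c4 * c5) + (((-300 : ℝ)) * a^12 * c2^5 * c4^4) + ((720 : ℝ) * a^12 * c2^5 * c3 * c4^2 * c5) + (((-360 : ℝ)) * a^12 * c2^5 * c3^2 * c5^2) + ((240 : ℝ) * a^12 * c2^6 * c4 * c5^2) + ((72 : ℝ) * a^12 * c1 * c2 * c3^5 * c4^2) + (((-144 : ℝ)) * a^12 * c1 * c2 * c3^6 * c5) + (((-288 : ℝ)) * a^12 * c1 * c2^2 * c3^3 * c4^3) + ((576 : ℝ) * a^12 * c1 * c2^2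 * c3^4 * c4 * c5) + ((480 : ℝ) * a^12 * c1 * c2^3 * c3 * c4^4) + (((-1584 : ℝ)) * a^12 * c1 * c2^3 * c3^2 * c4^2 * c5) + ((1632 : ℝ) * a^12 * c1 * c2^3 * c3^3 * c5^2) + ((480 : ℝ) * a^12 * c1 * c2^4 * c4^3 * c5) + (((-1728 : ℝ)) * a^12 * c1 * c2^4 * c3 * c4 * c5^2) + (((-240 : ℝ)) * a^12 * c1 * c2^5 * c5^3) + (((-18 : ℝ)) * a^12 * c1^2 * c3^4 * c4^3) + ((36 : ℝ) * a^12 * c1^2 * c3^5 * c4 * c5) + (((-54 : ℝ)) * a^12 * c1^2 * c2 * c3^2 * c4^4)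

noncomputable def Qc6 (a c1 c2 c3 c4 c5 : ℝ) : ℝ :=
  ((648 : ℝ) * a^12 * c1^2 * c2 * c3^3 * c4^2 * c5) + (((-1350 : ℝ)) * a^12 * c1^2 * c2 * c3^4 * c5^2) + (((-126 : ℝ)) * a^12 * c1^2 * c2^2 * c4^5) + (((-216 : ℝ)) * a^12 * c1^2 * c2^2 * c3 * c4^3 * c5) + ((1404 : ℝ) * a^12 * c1^2 * c2^2 * c3^2 * c4 * c5^2) + (((-180 : ℝ)) * a^12 * c1^2 * c2^3 * c4^2 * c5^2) + ((1416 : ℝ) * a^12 * c1^2 * c2^3 * c3 * c5^3) + ((36 : ℝ) * a^12 * c1^3 * c3 * c4^5) + (((-216 : ℝ)) * a^12 * c1^3 * c3^2 * c4^3 * c5) + ((360 : ℝ) * a^12 * c1^3 * c3^3 * c4 * c5^2) + ((180 : ℝ) * a^12 * c1^3 * c2 * c4^4 * c5) + (((-216 : ℝ)) * a^12 * c1^3 * c2 * c3 * c4^2 * c5^2) + (((-1080 : ℝ)) * a^12 * c1^3 * c2 * c3^2 * c5^3) + (((-216 : ℝ)) * a^12 * c1^3 * c2^2 * c4 * c5^3)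 + (((-108 : ℝ)) * a^12 * c1^4 * c4^3 * c5^2) + ((360 : ℝ) * a^12 * c1^4 * c3 * c4 * c5^3) + ((90 : ℝ) * a^12 * c1^4 * c2 * c5^4) + ((60 : ℝ) * a^14 * c2^3 * c3^2 * c4^4) + (((-240 : ℝ)) * a^14 * c2^3 * c3^3 * c4^2 * c5) + ((300 : ℝ) * a^14 * c2^3 * c3^4 * c5^2) + (((-120 : ℝ)) * a^14 * c2^4 * c4^5) + ((480 : ℝ) * a^14 * c2^4 * c3 * c4^3 * c5) + (((-720 : ℝ)) * a^14 * c2^4 * c3^2 * c4 * c5^2) + ((360 : ℝ) * a^14 * c2^5 * c4^2 * c5^2) + (((-240 : ℝ)) * a^14 * c2^5 * c3 * c5^3)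

noncomputable def Qc7 (a c1 c2 c3 c4 c5 : ℝ) : ℝ :=
  (((-72 : ℝ)) * a^14 * c1 * c2 * c3^3 * c4^4) + ((288 : ℝ) * a^14 * c1 * c2 * c3^4 * c4^2 * c5) + (((-360 : ℝ)) * a^14 * c1 * c2 * c3^5 * c5^2) + ((144 : ℝ) * a^14 * c1 * c2^2 * c3 * c4^5) + (((-576 : ℝ)) * a^14 * c1 * c2^2 * c3^2 * c4^3 * c5) + ((864 : ℝ) * a^14 * c1 * c2^2 * c3^3 * c4 * c5^2) + ((120 : ℝ) * a^14 * c1 * c2^3 * c4^4 * c5) + (((-1152 : ℝ)) * a^14 * c1 * c2^3 * c3 * c4^2 * c5^2) + ((1488 : ℝ) * a^14 * c1 * c2^3 * c3^2 * c5^3) + (((-480 : ℝ)) * a^14 * c1 * c2^4 * c4 * c5^3) + ((18 : ℝ) * a^14 * c1^2 * c3^2 * c4^5) + (((-72 : ℝ)) * a^14 * c1^2 * c3^3 * c4^3 * c5) + ((90 : ℝ) * a^14 * c1^2 * c3^4 * c4 * c5^2) + (((-42 : ℝ)) * a^14 * c1^2 * c2 * c4^6) + ((36 : ℝ) * a^14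 * c1^2 * c2 * c3 * c4^4 * c5) + ((540 : ℝ) * a^14 * c1^2 * c2 * c3^2 * c4^2 * c5^2) + (((-1320 : ℝ)) * a^14 * c1^2 * c2 * c3^3 * c5^3) + ((180 : ℝ) * a^14 * c1^2 * c2^2 * c4^3 * c5^2) + ((360 : ℝ) * a^14 * c1^2 * c2^2 * c3 * c4 * c5^3) + ((282 : ℝ) * a^14 * c1^2 * c2^3 * c5^4) + ((36 : ℝ) * a^14 * c1^3 * c4^5 * c5) + (((-216 : ℝ)) * a^14 * c1^3 * c3 * c4^3 * c5^2) + ((360 : ℝ) * a^14 * c1^3 * c3^2 * c4 * c5^3) + (((-216 : ℝ)) * a^14 * c1^3 * c2 * c4^2 * c5^3) + (((-180 : ℝ)) * a^14 * c1^3 * c2 * c3 * c5^4)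

noncomputable def Qc8 (a c1 c2 c3 c4 c5 : ℝ) : ℝ :=
  ((90 : ℝ) * a^14 * c1^4 * c4 * c5^4) + (((-20 : ℝ)) * a^16 * c2^3 * c4^6) + ((120 : ℝ) * a^16 * c2^3 * c3 * c4^4 * c5) + (((-360 : ℝ)) * a^16 * c2^3 * c3^2 * c4^2 * c5^2) + ((400 : ℝ) * a^16 * c2^3 * c3^3 * c5^3) + ((240 : ℝ) * a^16 * c2^4 * c4^3 * c5^2) + (((-480 : ℝ)) * a^16 * c2^4 * c3 * c4 * c5^3) + (((-60 : ℝ)) * a^16 * c2^5 * c5^4) + ((24 : ℝ) * a^16 * c1 * c2 * c3 * c4^6) + (((-144 : ℝ)) * a^16 * c1 * c2 * c3^2 * c4^4 * c5) + ((432 : ℝ) * a^16 * c1 * c2 * c3^3 * c4^2 * c5^2) + (((-480 : ℝ)) * a^16 * c1 * c2 * c3^4 * c5^3) + (((-288 : ℝ)) * a^16 * c1 * c2^2 * c3 * c4^3 * c5^2) + ((576 : ℝ) * a^16 * c1 * c2^2 * c3^2 * c4 * c5^3) + (((-240 : ℝ)) * a^16 * c1 * c2^3 * c4^2 * c5^3)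 + ((672 : ℝ) * a^16 * c1 * c2^3 * c3 * c5^4) + (((-6 : ℝ)) * a^16 * c1^2 * c4^7) + ((36 : ℝ) * a^16 * c1^2 * c3 * c4^5 * c5) + (((-108 : ℝ)) * a^16 * c1^2 * c3^2 * c4^3 * c5^2) + ((120 : ℝ) * a^16 * c1^2 * c3^3 * c4 * c5^3) + ((90 : ℝ) * a^16 * c1^2 * c2 * c4^4 * c5^2) + ((72 : ℝ) * a^16 * c1^2 * c2 * c3 * c4^2 * c5^3) + (((-630 : ℝ)) * a^16 * c1^2 * c2 * c3^2 * c5^4) + (((-54 : ℝ)) * a^16 * c1^2 * c2^2 * c4 * c5^4) + (((-72 : ℝ)) * a^16 * c1^3 * c4^3 * c5^3)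

noncomputable def Qc9 (a c1 c2 c3 c4 c5 : ℝ) : ℝ :=
  ((180 : ℝ) * a^16 * c1^3 * c3 * c4 * c5^4) + ((36 : ℝ) * a^16 * c1^3 * c2 * c5^5) + ((60 : ℝ) * a^18 * c2^3 * c4^4 * c5^2) + (((-240 : ℝ)) * a^18 * c2^3 * c3 * c4^2 * c5^3) + ((300 : ℝ) * a^18 * c2^3 * c3^2 * c5^4) + (((-120 : ℝ)) * a^18 * c2^4 * c4 * c5^4) + (((-72 : ℝ)) * a^18 * c1 * c2 * c3 * c4^4 * c5^2) + ((288 : ℝ) * a^18 * c1 * c2 * c3^2 * c4^2 * c5^3) + (((-360 : ℝ)) * a^18 * c1 * c2 * c3^3 * c5^4) + ((144 : ℝ) * a^18 * c1 * c2^2 * c3 * c4 * c5^4) + ((120 : ℝ) * a^18 * c1 * c2^3 * c5^5) + ((18 : ℝ) * a^18 * c1^2 * c4^5 * c5^2) + (((-72 : ℝ)) * a^18 * c1^2 * c3 * c4^3 * c5^3) + ((90 : ℝ) * a^18 * c1^2 * c3^2 * c4 * c5^4) + (((-54 : ℝ)) * a^18 * c1^2 * c2 * c4^2 * c5^4) +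 (((-108 : ℝ)) * a^18 * c1^2 * c2 * c3 * c5^5) + ((36 : ℝ) * a^18 * c1^3 * c4 * c5^5) + (((-60 : ℝ)) * a^20 * c2^3 * c4^2 * c5^4) + ((120 : ℝ) * a^20 * c2^3 * c3 * c5^5) + ((72 : ℝ) * a^20 * c1 * c2 * c3 * c4^2 * c5^4) + (((-144 : ℝ)) * a^20 * c1 * c2 * c3^2 * c5^5) + (((-18 : ℝ)) * a^20 * c1^2 * c4^3 * c5^4) + ((36 : ℝ) * a^20 * c1^2 * c3 * c4 * c5^5) + ((6 : ℝ) * a^20 * c1^2 * c2 * c5^6) + ((20 : ℝ) * a^22 * c2^3 * c5^6)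

noncomputable def Qc10 (a c1 c2 c3 c4 c5 : ℝ) : ℝ :=
  (((-24 : ℝ)) * a^22 * c1 * c2 * c3 * c5^6) + ((6 : ℝ) * a^22 * c1^2 * c4 * c5^6)

noncomputable def Qpoly (a c1 c2 c3 c4 c5 : ℝ) : ℝ :=
  Qc0 a c1 c2 c3 c4 c5 + Qc1 a c1 c2 c3 c4 c5 + Qc2 a c1 c2 c3 c4 c5 + Qc3 a c1 c2 c3 c4 c5 + Qc4 a c1 c2 c3 c4 c5 + Qc5 a c1 c2 c3 c4 c5 + Qc6 a c1 c2 c3 c4 c5 + Qc7 a c1 c2 c3 c4 c5 + Qc8 a c1 c2 c3 c4 c5 + Qc9 a c1 c2 c3 c4 c5 + Qc10 a c1 c2 c3 c4 c5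


theorem key_id (a c1 c2 c3 c4 c5 : ℝ) :
    c1^6 * ((c1 - c2*a + c3*a^2 - c4*a^3 + c5*a^4)^3 - (c1 + c2*a + c3*a^2 + c4*a^3 + c5*a^4)^3)
      - a * ((-6*c2*c1^2) + (-20*c2^3 - 6*c1^2*c4 + 24*c1*c2*c3) * a^2)
        * (c1 + c2*a + c3*a^2 + c4*a^3 + c5*a^4)^3 * (c1 - c2*a + c3*a^2 - c4*a^3 + c5*a^4)^3
    = a^5 * Qpoly a c1 c2 c3 c4 c5 := by
  unfold Qpoly Qc0 Qc1 Qc2 Qc3 Qc4 Qc5 Qc6 Qc7 Qc8 Qc9 Qc10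
  ring

lemma Qc0_cont : Continuous (fun p : ℝ × ℝ × ℝ × ℝ × ℝ × ℝ =>
    Qc0 p.1 p.2.1 p.2.2.1 p.2.2.2.1 p.2.2.2.2.1 p.2.2.2.2.2) := by
  unfold Qc0; fun_prop

lemma Qc1_cont : Continuous (fun p : ℝ × ℝ × ℝ × ℝ × ℝ × ℝ =>
    Qc1 p.1 p.2.1 p.2.2.1 p.2.2.2.1 p.2.2.2.2.1 p.2.2.2.2.2) := by
  unfold Qc1; fun_prop

lemma Qc2_cont : Continuous (fun p : ℝ × ℝ × ℝ × ℝ × ℝ × ℝ =>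
    Qc2 p.1 p.2.1 p.2.2.1 p.2.2.2.1 p.2.2.2.2.1 p.2.2.2.2.2) := by
  unfold Qc2; fun_prop

lemma Qc3_cont : Continuous (fun p : ℝ × ℝ × ℝ × ℝ × ℝ × ℝ =>
    Qc3 p.1 p.2.1 p.2.2.1 p.2.2.2.1 p.2.2.2.2.1 p.2.2.2.2.2) := by
  unfold Qc3; fun_prop

lemma Qc4_cont : Continuous (fun p : ℝ × ℝ × ℝ × ℝ × ℝ × ℝ =>
    Qc4 p.1 p.2.1 p.2.2.1 p.2.2.2.1 p.2.2.2.2.1 p.2.2.2.2.2) := by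
  unfold Qc4; fun_prop

lemma Qc5_cont : Continuous (fun p : ℝ × ℝ × ℝ × ℝ × ℝ × ℝ =>
    Qc5 p.1 p.2.1 p.2.2.1 p.2.2.2.1 p.2.2.2.2.1 p.2.2.2.2.2) := by
  unfold Qc5; fun_prop

lemma Qc6_cont : Continuous (fun p : ℝ × ℝ × ℝ × ℝ × ℝ × ℝ =>
    Qc6 p.1 p.2.1 p.2.2.1 p.2.2.2.1 p.2.2.2.2.1 p.2.2.2.2.2) := by
  unfold Qc6; fun_prop

lemma Qc7_cont : Continuous (fun p : ℝ × ℝ × ℝ × ℝ × ℝ × ℝ =>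
    Qc7 p.1 p.2.1 p.2.2.1 p.2.2.2.1 p.2.2.2.2.1 p.2.2.2.2.2) := by
  unfold Qc7; fun_prop

lemma Qc8_cont : Continuous (fun p : ℝ × ℝ × ℝ × ℝ × ℝ × ℝ =>
    Qc8 p.1 p.2.1 p.2.2.1 p.2.2.2.1 p.2.2.2.2.1 p.2.2.2.2.2) := by
  unfold Qc8; fun_prop

lemma Qc9_cont : Continuous (fun p : ℝ × ℝ × ℝ × ℝ × ℝ × ℝ =>
    Qc9 p.1 p.2.1 p.2.2.1 p.2.2.2.1 p.2.2.2.2.1 p.2.2.2.2.2) := by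
  unfold Qc9; fun_prop

lemma Qc10_cont : Continuous (fun p : ℝ × ℝ × ℝ × ℝ × ℝ × ℝ =>
    Qc10 p.1 p.2.1 p.2.2.1 p.2.2.2.1 p.2.2.2.2.1 p.2.2.2.2.2) := by
  unfold Qc10; fun_prop

lemma Qpoly_cont : Continuous (fun p : ℝ × ℝ × ℝ × ℝ × ℝ × ℝ =>
    Qpoly p.1 p.2.1 p.2.2.1 p.2.2.2.1 p.2.2.2.2.1 p.2.2.2.2.2) := by
  unfold Qpoly
  exact ((((((((((Qc0_cont).add Qc1_cont).add Qc2_cont).add Qc3_cont).add Qc4_cont).add Qc5_cont).add Qc6_cont).add Qc7_cont).add Qc8_cont).add Qc9_cont).add Qc10_cont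


lemma Qpoly_bound (M : ℝ) : ∃ C : ℝ, 0 < C ∧ ∀ a c1 c2 c3 c4 c5 : ℝ,
    |a| ≤ 1 → |c1| ≤ M → |c2| ≤ M → |c3| ≤ M → |c4| ≤ M → |c5| ≤ M →
    |Qpoly a c1 c2 c3 c4 c5| ≤ C := by
  obtain ⟨C, hC⟩ := (isCompact_Icc (a := ((-1, -M, -M, -M, -M, -M) : ℝ × ℝ × ℝ × ℝ × ℝ × ℝ))
    (b := (1, M, M, M, M, M))).exists_bound_of_continuousOn Qpoly_cont.continuousOn
  refine ⟨max C 1, lt_of_lt_of_le one_pos (le_max_right _ _), ?_⟩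
  intro a c1 c2 c3 c4 c5 ha h1 h2 h3 h4 h5
  have hm := hC (a, c1, c2, c3, c4, c5) ?_
  · exact le_trans hm (le_max_left _ _)
  · rw [Set.mem_Icc]
    rw [abs_le] at ha h1 h2 h3 h4 h5
    exact ⟨⟨ha.1, h1.1, h2.1, h3.1, h4.1, h5.1⟩, ⟨ha.2, h1.2, h2.2, h3.2, h4.2, h5.2⟩⟩

lemma iDW_eq {f : ℝ → ℝ} {m : ℕ} (hf : ContDiff ℝ 6 f) (hmn : m ≤ 6) {s : Set ℝ}
    (hs : UniqueDiffOn ℝ s) {x : ℝ} (hx : x ∈ s) :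
    iteratedDerivWithin m f s x = iteratedDeriv m f x := by
  rw [iteratedDerivWithin_eq_iteratedFDerivWithin, iteratedDeriv_eq_iteratedFDeriv]
  have h := contDiff_iff_ftaylorSeries.mp hf
  have h1 := (h.hasFTaylorSeriesUpToOn s).eq_iteratedFDerivWithin_of_uniqueDiffOn
    (m := m) (by exact_mod_cast hmn) hs hx
  have h2 := h.eq_iteratedFDeriv (m := m) (by exact_mod_cast hmn) x
  rw [← h1, h2]

lemma taylor6 {f : ℝ → ℝ} {m₂ : ℝ} (hf : ContDiff ℝ 6 f)
    (hd6 : ∀ x, |iteratedDeriv 6 f x| ≤ m₂) (α : ℝ) {a : ℝ} (ha : 0 < a) :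
    |f (α + a) - (f α + iteratedDeriv 1 f α * a + iteratedDeriv 2 f α * a ^ 2 / 2
      + iteratedDeriv 3 f α * a ^ 3 / 6 + iteratedDeriv 4 f α * a ^ 4 / 24
      + iteratedDeriv 5 f α * a ^ 5 / 120)| ≤ m₂ * a ^ 6 / 120 := by
  have hab : α ≤ α + a := by linarith
  have hur : UniqueDiffOn ℝ (Icc α (α + a)) := uniqueDiffOn_Icc (by linarith)
  have hmem : α ∈ Icc α (α + a) := ⟨le_refl _, hab⟩
  have hbd := taylor_mean_remainder_bound (f := f) (n := 5) (x := α + a) (C := m₂) hab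
    (hf.contDiffOn.of_le (by norm_num))
    (right_mem_Icc.mpr hab)
    (fun y hy => by rw [Real.norm_eq_abs, iDW_eq hf (by norm_num) hur hy]; exact hd6 y)
  rw [taylor_within_apply] at hbd
  have hsum : ∑ k ∈ Finset.range (5 + 1),
      ((((k.factorial : ℝ))⁻¹ * (α + a - α) ^ k) • iteratedDerivWithin k f (Icc α (α + a)) α)
      = f α + iteratedDeriv 1 f α * a + iteratedDeriv 2 f α * a ^ 2 / 2
      + iteratedDeriv 3 f α * a ^ 3 / 6 + iteratedDeriv 4 f α * a ^ 4 / 24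
      + iteratedDeriv 5 f α * a ^ 5 / 120 := by
    rw [Finset.sum_range_succ, Finset.sum_range_succ, Finset.sum_range_succ,
      Finset.sum_range_succ, Finset.sum_range_succ, Finset.sum_range_one]
    rw [iDW_eq hf (by norm_num) hur hmem, iDW_eq hf (by norm_num) hur hmem,
      iDW_eq hf (by norm_num) hur hmem, iDW_eq hf (by norm_num) hur hmem,
      iDW_eq hf (by norm_num) hur hmem, iDW_eq hf (by norm_num) hur hmem]
    simp [Nat.factorial]
    ring
  rw [hsum] at hbd
  rw [Real.norm_eq_abs] at hbd
  have harg : α + a - α = a := by ring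
  rw [harg] at hbd
  calc |_| ≤ m₂ * a ^ 6 / ((Nat.factorial 5 : ℝ)) := hbd
    _ = m₂ * a ^ 6 / 120 := by norm_num [Nat.factorial]

lemma taylor6_neg {f : ℝ → ℝ} {m₂ : ℝ} (hf : ContDiff ℝ 6 f)
    (hd6 : ∀ x, |iteratedDeriv 6 f x| ≤ m₂) (α : ℝ) {a : ℝ} (ha : 0 < a) :
    |f (α - a) - (f α - iteratedDeriv 1 f α * a + iteratedDeriv 2 f α * a ^ 2 / 2
      - iteratedDeriv 3 f α * a ^ 3 / 6 + iteratedDeriv 4 f α * a ^ 4 / 24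
      - iteratedDeriv 5 f α * a ^ 5 / 120)| ≤ m₂ * a ^ 6 / 120 := by
  set g : ℝ → ℝ := fun t => f (2*α - t) with hg_def
  have hgd : ∀ n : ℕ, ∀ t : ℝ, iteratedDeriv n g t = (-1:ℝ)^n * iteratedDeriv n f (2*α - t) := by
    intro n t
    have h2 := iteratedDeriv_comp_neg n (fun z => f (2*α + z)) t
    have h3 := iteratedDeriv_comp_const_add n f (2*α)
    rw [h3] at h2
    have hgg : g = fun x => f (2*α + -x) := by
      funext x; simp [hg_def, sub_eq_add_neg]
    rw [hgg]
    simpa [sub_eq_add_neg, smul_eq_mul] using h2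
  have hg : ContDiff ℝ 6 g := hf.comp (contDiff_const.sub contDiff_id)
  have hgd6 : ∀ x, |iteratedDeriv 6 g x| ≤ m₂ := by
    intro x; rw [hgd, abs_mul]
    simpa using hd6 (2*α - x)
  have hmain := taylor6 hg hgd6 α ha
  have e1 : g (α + a) = f (α - a) := by
    rw [hg_def]; norm_num; congr 1; ring
  have e0 : g α = f α := by rw [hg_def]; norm_num; congr 1; ring
  have eα : 2*α - α = α := by ring
  have e2 : g α + iteratedDeriv 1 g α * a + iteratedDeriv 2 g α * a ^ 2 / 2
      + iteratedDeriv 3 g α * a ^ 3 / 6 + iteratedDeriv 4 g α * a ^ 4 / 24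
      + iteratedDeriv 5 g α * a ^ 5 / 120
      = f α - iteratedDeriv 1 f α * a + iteratedDeriv 2 f α * a ^ 2 / 2
      - iteratedDeriv 3 f α * a ^ 3 / 6 + iteratedDeriv 4 f α * a ^ 4 / 24
      - iteratedDeriv 5 f α * a ^ 5 / 120 := by
    rw [hgd 1 α, hgd 2 α, hgd 3 α, hgd 4 α, hgd 5 α, eα, e0]
    ring
  rw [e1, e2] at hmain
  exact hmain

lemma dev_bound {m₂ a c2 c3 c4 c5 r : ℝ} (hm₂ : 0 < m₂) (ha : 0 < a) (ha1 : a ≤ 1)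
    (hb2 : |c2| ≤ m₂) (hb3 : |c3| ≤ m₂) (hb4 : |c4| ≤ m₂) (hb5 : |c5| ≤ m₂) (hr : |r| ≤ m₂) :
    |c2*a + c3*a^2 + c4*a^3 + c5*a^4 + r*a^5| ≤ 5*(m₂*a) := by
  have key : ∀ (c : ℝ) (k : ℕ), |c| ≤ m₂ → |c * a^(k+1)| ≤ m₂ * a := by
    intro c k hc
    rw [abs_mul, abs_pow, abs_of_pos ha]
    have hpk : a^(k+1) ≤ a := by
      calc a^(k+1) ≤ a^1 := pow_le_pow_of_le_one ha.le ha1 (by omega)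
        _ = a := pow_one a
    have h1 : |c| * a^(k+1) ≤ m₂ * a^(k+1) :=
      mul_le_mul_of_nonneg_right hc (by positivity)
    have h2 : m₂ * a^(k+1) ≤ m₂ * a := mul_le_mul_of_nonneg_left hpk hm₂.le
    linarith
  have k1 : |c2 * a| ≤ m₂ * a := by simpa using key c2 0 hb2
  have k2 : |c3 * a^2| ≤ m₂ * a := key c3 1 hb3
  have k3 : |c4 * a^3| ≤ m₂ * a := key c4 2 hb4
  have k4 : |c5 * a^4| ≤ m₂ * a := key c5 3 hb5
  have k5 : |r * a^5| ≤ m₂ * a := key r 4 hr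
  have t1 := abs_add_le (c2*a + c3*a^2 + c4*a^3 + c5*a^4) (r*a^5)
  have t2 := abs_add_le (c2*a + c3*a^2 + c4*a^3) (c5*a^4)
  have t3 := abs_add_le (c2*a + c3*a^2) (c4*a^3)
  have t4 := abs_add_le (c2*a) (c3*a^2)
  linarith

lemma loc_bounds {m₁ m₂ c1 x a : ℝ} (hm₁ : 0 < m₁) (hm₂ : 0 < m₂) (hc1 : c1 ≤ -m₁)
    (hb1 : |c1| ≤ m₂) (hdev : |x - c1| ≤ 5*(m₂*a)) (h5 : 5*(m₂*a) ≤ m₁/2)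
    (ha : 0 < a) (ha1 : a ≤ 1) :
    x ≠ 0 ∧ m₁/2 ≤ |x| ∧ |x| ≤ 6*m₂ := by
  have hd := abs_le.mp hdev
  have hma : 0 ≤ m₂*a := by positivity
  have hmaa : m₂*a ≤ m₂ := by nlinarith
  have hx_neg : x < 0 := by nlinarith
  have hc1' := abs_le.mp hb1
  refine ⟨ne_of_lt hx_neg, ?_, ?_⟩
  · rw [abs_of_neg hx_neg]; linarith
  · rw [abs_of_neg hx_neg]; linarith

lemma cube_recip_diff {m₁ m₂ a r D T : ℝ} (hm₁ : 0 < m₁) (hm₂ : 0 < m₂) (ha : 0 < a)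
    (hD : D = T + r*a^5) (hr : |r| ≤ m₂)
    (hDlb : m₁/2 ≤ |D|) (hDub : |D| ≤ 6*m₂) (hTlb : m₁/2 ≤ |T|) (hTub : |T| ≤ 6*m₂)
    (hD0 : D ≠ 0) (hT0 : T ≠ 0) :
    |1/D^3 - 1/T^3| ≤ 6912*m₂^3/m₁^6 * a^5 := by
  have e : 1/D^3 - 1/T^3 = ((T - D)*(T^2 + T*D + D^2))/(D^3*T^3) := by
    field_simp; ring
  have hnum1 : |T - D| ≤ m₂ * a^5 := by
    rw [show T - D = -(r*a^5) by rw [hD]; ring, abs_neg, abs_mul, abs_pow, abs_of_pos ha]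
    exact mul_le_mul_of_nonneg_right hr (by positivity)
  have hq1 : |T^2| ≤ 36*m₂^2 := by
    rw [abs_pow]; nlinarith [abs_nonneg T]
  have hq2 : |T*D| ≤ 36*m₂^2 := by
    rw [abs_mul]; nlinarith [abs_nonneg T, abs_nonneg D]
  have hq3 : |D^2| ≤ 36*m₂^2 := by
    rw [abs_pow]; nlinarith [abs_nonneg D]
  have hquad : |T^2 + T*D + D^2| ≤ 108*m₂^2 := by
    have u1 := abs_add_le (T^2 + T*D) (D^2)
    have u2 := abs_add_le (T^2) (T*D)
    linarith
  have hnum : |(T - D)*(T^2 + T*D + D^2)| ≤ (m₂*a^5) * (108*m₂^2) := by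
    rw [abs_mul]
    exact mul_le_mul hnum1 hquad (abs_nonneg _) (by positivity)
  have hden : m₁^6/64 ≤ |D^3*T^3| := by
    rw [abs_mul, abs_pow, abs_pow]
    have h1 : (m₁/2)^3 ≤ |D|^3 := pow_le_pow_left₀ (by positivity) hDlb 3
    have h2 : (m₁/2)^3 ≤ |T|^3 := pow_le_pow_left₀ (by positivity) hTlb 3
    have h3 : (m₁/2)^3*(m₁/2)^3 ≤ |D|^3*|T|^3 :=
      mul_le_mul h1 h2 (by positivity) (by positivity)
    calc m₁^6/64 = (m₁/2)^3*(m₁/2)^3 := by ring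
      _ ≤ |D|^3*|T|^3 := h3
  rw [e, abs_div]
  calc |(T - D)*(T^2 + T*D + D^2)| / |D^3*T^3|
      ≤ ((m₂*a^5) * (108*m₂^2)) / (m₁^6/64) :=
        div_le_div₀ (by positivity) hnum (by positivity) hden
    _ = 6912*m₂^3/m₁^6 * a^5 := by field_simp; ring

lemma e3_lemma (a c1 c2 c3 c4 c5 Tp Tm : ℝ) (ha0 : a ≠ 0) (hc1ne : c1 ≠ 0)
    (hTp : Tp = c1 + c2*a + c3*a^2 + c4*a^3 + c5*a^4)
    (hTm : Tm = c1 - c2*a + c3*a^2 - c4*a^3 + c5*a^4)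
    (hTp0 : Tp ≠ 0) (hTm0 : Tm ≠ 0) :
    (1/a) * (1/Tp^3 - 1/Tm^3) - (-6*c2/c1^4)
        - ((-20*c2^3 - 6*c1^2*c4 + 24*c1*c2*c3)/c1^6) * a^2
        = (a^5 * Qpoly a c1 c2 c3 c4 c5) / (a*(c1^6*(Tp^3*Tm^3))) := by
  have hkey := key_id a c1 c2 c3 c4 c5
  rw [← hTp, ← hTm] at hkey
  rw [← hkey]
  field_simp
  ring


lemma core {m₁ m₂ CQ : ℝ} (hm₁ : 0 < m₁) (hm₂ : 0 < m₂) (hCQ : 0 < CQ)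
    (hQb : ∀ a c1 c2 c3 c4 c5 : ℝ, |a| ≤ 1 → |c1| ≤ m₂ → |c2| ≤ m₂ → |c3| ≤ m₂ →
      |c4| ≤ m₂ → |c5| ≤ m₂ → |Qpoly a c1 c2 c3 c4 c5| ≤ CQ)
    (c1 c2 c3 c4 c5 u v a : ℝ)
    (hc1 : c1 ≤ -m₁) (hb1 : |c1| ≤ m₂) (hb2 : |c2| ≤ m₂) (hb3 : |c3| ≤ m₂)
    (hb4 : |c4| ≤ m₂) (hb5 : |c5| ≤ m₂)
    (ha : 0 < a) (ha1 : a ≤ 1) (haA : a ≤ m₁ / (12 * (m₂ + 1)))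
    (hu : |u - (c1*a + c2*a^2 + c3*a^3 + c4*a^4 + c5*a^5)| ≤ m₂ * a^6 / 120)
    (hv : |v - (c1*a - c2*a^2 + c3*a^3 - c4*a^4 + c5*a^5)| ≤ m₂ * a^6 / 120) :
    |a^2 * (1/(-v)^3 - 1/(-u)^3) - (-6*c2/c1^4)
      - ((-20*c2^3 - 6*c1^2*c4 + 24*c1*c2*c3)/c1^6) * a^2|
      ≤ (13824*m₂^3/m₁^6 + 64*CQ/m₁^12) * a^4 := by
  have ha0 : a ≠ 0 := ha.ne'
  have hc1ne : c1 ≠ 0 := by intro h; rw [h] at hc1; linarith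
  set Tp : ℝ := c1 + c2*a + c3*a^2 + c4*a^3 + c5*a^4 with hTp
  set Tm : ℝ := c1 - c2*a + c3*a^2 - c4*a^3 + c5*a^4 with hTm
  set Dp : ℝ := u / a with hDp
  set Dm : ℝ := v / a with hDm
  set ρp : ℝ := (u - Tp * a) / a^6 with hρp
  set ρm : ℝ := (v - Tm * a) / a^6 with hρm
  have hu_eq : u = a * Dp := by rw [hDp]; field_simp
  have hv_eq : v = a * Dm := by rw [hDm]; field_simp
  have hDp_eq : Dp = Tp + ρp * a^5 := by rw [hDp, hρp]; field_simp; ring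
  have hDm_eq : Dm = Tm + ρm * a^5 := by rw [hDm, hρm]; field_simp; ring
  have hρp_le : |ρp| ≤ m₂ := by
    rw [hρp, abs_div, abs_pow, abs_of_pos ha, div_le_iff₀ (by positivity)]
    have e : u - Tp * a = u - (c1*a + c2*a^2 + c3*a^3 + c4*a^4 + c5*a^5) := by
      rw [hTp]; ring
    rw [e]
    nlinarith [hu, pow_pos ha 6]
  have hρm_le : |ρm| ≤ m₂ := by
    rw [hρm, abs_div, abs_pow, abs_of_pos ha, div_le_iff₀ (by positivity)]
    have e : v - Tm * a = v - (c1*a - c2*a^2 + c3*a^3 - c4*a^4 + c5*a^5) := by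
      rw [hTm]; ring
    rw [e]
    nlinarith [hv, pow_pos ha 6]
  have h5ma : 5*(m₂*a) ≤ m₁/2 := by
    have h12 : (0:ℝ) < 12*(m₂+1) := by positivity
    have hA := (le_div_iff₀ h12).mp haA
    nlinarith [mul_pos hm₂ ha]
  have hzero : |(0:ℝ)| ≤ m₂ := by simp [hm₂.le]
  have hTp_dev : |Tp - c1| ≤ 5*(m₂*a) := by
    have e : Tp - c1 = c2*a + c3*a^2 + c4*a^3 + c5*a^4 + 0*a^5 := by rw [hTp]; ring
    rw [e]; exact dev_bound hm₂ ha ha1 hb2 hb3 hb4 hb5 hzero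
  have hTm_dev : |Tm - c1| ≤ 5*(m₂*a) := by
    have e : Tm - c1 = (-c2)*a + c3*a^2 + (-c4)*a^3 + c5*a^4 + 0*a^5 := by rw [hTm]; ring
    rw [e]
    exact dev_bound hm₂ ha ha1 (by rwa [abs_neg]) hb3 (by rwa [abs_neg]) hb5 hzero
  have hDp_dev : |Dp - c1| ≤ 5*(m₂*a) := by
    have e : Dp - c1 = c2*a + c3*a^2 + c4*a^3 + c5*a^4 + ρp*a^5 := by rw [hDp_eq, hTp]; ring
    rw [e]; exact dev_bound hm₂ ha ha1 hb2 hb3 hb4 hb5 hρp_le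
  have hDm_dev : |Dm - c1| ≤ 5*(m₂*a) := by
    have e : Dm - c1 = (-c2)*a + c3*a^2 + (-c4)*a^3 + c5*a^4 + ρm*a^5 := by
      rw [hDm_eq, hTm]; ring
    rw [e]
    exact dev_bound hm₂ ha ha1 (by rwa [abs_neg]) hb3 (by rwa [abs_neg]) hb5 hρm_le
  obtain ⟨hTp0, hTplb, hTpub⟩ := loc_bounds hm₁ hm₂ hc1 hb1 hTp_dev h5ma ha ha1
  obtain ⟨hTm0, hTmlb, hTmub⟩ := loc_bounds hm₁ hm₂ hc1 hb1 hTm_dev h5ma ha ha1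
  obtain ⟨hDp0, hDplb, hDpub⟩ := loc_bounds hm₁ hm₂ hc1 hb1 hDp_dev h5ma ha ha1
  obtain ⟨hDm0, hDmlb, hDmub⟩ := loc_bounds hm₁ hm₂ hc1 hb1 hDm_dev h5ma ha ha1
  -- rewrite the goal expression
  have hGeq : a^2 * (1/(-v)^3 - 1/(-u)^3) = (1/a) * (1/Dp^3 - 1/Dm^3) := by
    rw [hu_eq, hv_eq]
    field_simp
    ring
  -- the three pieces
  have hA : |(1/a) * (1/Dp^3 - 1/Tp^3)| ≤ 6912*m₂^3/m₁^6 * a^4 := by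
    have h := cube_recip_diff hm₁ hm₂ ha hDp_eq hρp_le hDplb hDpub hTplb hTpub hDp0 hTp0
    rw [abs_mul, abs_of_pos (by positivity : (0:ℝ) < 1/a)]
    calc (1/a) * |1/Dp^3 - 1/Tp^3| ≤ (1/a) * (6912*m₂^3/m₁^6 * a^5) :=
          mul_le_mul_of_nonneg_left h (by positivity)
      _ = 6912*m₂^3/m₁^6 * a^4 := by field_simp
  have hB : |(1/a) * (1/Dm^3 - 1/Tm^3)| ≤ 6912*m₂^3/m₁^6 * a^4 := by
    have h := cube_recip_diff hm₁ hm₂ ha hDm_eq hρm_le hDmlb hDmub hTmlb hTmub hDm0 hTm0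
    rw [abs_mul, abs_of_pos (by positivity : (0:ℝ) < 1/a)]
    calc (1/a) * |1/Dm^3 - 1/Tm^3| ≤ (1/a) * (6912*m₂^3/m₁^6 * a^5) :=
          mul_le_mul_of_nonneg_left h (by positivity)
      _ = 6912*m₂^3/m₁^6 * a^4 := by field_simp
  have hC : |(1/a) * (1/Tp^3 - 1/Tm^3) - (-6*c2/c1^4)
      - ((-20*c2^3 - 6*c1^2*c4 + 24*c1*c2*c3)/c1^6) * a^2|
      ≤ 64*CQ/m₁^12 * a^4 := by
    have e3 := e3_lemma a c1 c2 c3 c4 c5 Tp Tm ha0 hc1ne hTp hTm hTp0 hTm0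
    have hQ := hQb a c1 c2 c3 c4 c5 (by rw [abs_of_pos ha]; exact ha1) hb1 hb2 hb3 hb4 hb5
    have hdenlb : m₁^12/64 ≤ |c1^6*(Tp^3*Tm^3)| := by
      rw [abs_mul, abs_mul, abs_pow, abs_pow, abs_pow]
      have hc1m : m₁ ≤ |c1| := by
        rw [abs_of_neg (by linarith : c1 < 0)]; linarith
      have h1 : m₁^6 ≤ |c1|^6 := pow_le_pow_left₀ hm₁.le hc1m 6
      have h2 : (m₁/2)^3 ≤ |Tp|^3 := pow_le_pow_left₀ (by positivity) hTplb 3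
      have h3 : (m₁/2)^3 ≤ |Tm|^3 := pow_le_pow_left₀ (by positivity) hTmlb 3
      have h4 : (m₁/2)^3*(m₁/2)^3 ≤ |Tp|^3*|Tm|^3 :=
        mul_le_mul h2 h3 (by positivity) (by positivity)
      have h5 : m₁^6*((m₁/2)^3*(m₁/2)^3) ≤ |c1|^6*(|Tp|^3*|Tm|^3) :=
        mul_le_mul h1 h4 (by positivity) (by positivity)
      calc m₁^12/64 = m₁^6*((m₁/2)^3*(m₁/2)^3) := by ring
        _ ≤ |c1|^6*(|Tp|^3*|Tm|^3) := h5
    rw [e3, abs_div, abs_mul, abs_mul, abs_pow, abs_of_pos ha]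
    calc a^5 * |Qpoly a c1 c2 c3 c4 c5| / (a * |c1^6*(Tp^3*Tm^3)|)
        ≤ a^5 * CQ / (a * (m₁^12/64)) := by
          apply div_le_div₀ (by positivity)
            (mul_le_mul_of_nonneg_left hQ (by positivity)) (by positivity)
          exact mul_le_mul_of_nonneg_left hdenlb ha.le
      _ = 64*CQ/m₁^12 * a^4 := by field_simp
  -- combine
  have hsplit : a^2 * (1/(-v)^3 - 1/(-u)^3) - (-6*c2/c1^4)
      - ((-20*c2^3 - 6*c1^2*c4 + 24*c1*c2*c3)/c1^6) * a^2
      = ((1/a) * (1/Dp^3 - 1/Tp^3)) - ((1/a) * (1/Dm^3 - 1/Tm^3))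
        + ((1/a) * (1/Tp^3 - 1/Tm^3) - (-6*c2/c1^4)
          - ((-20*c2^3 - 6*c1^2*c4 + 24*c1*c2*c3)/c1^6) * a^2) := by
    rw [hGeq]; ring
  rw [hsplit]
  have tri1 := abs_add_le (((1/a) * (1/Dp^3 - 1/Tp^3)) - ((1/a) * (1/Dm^3 - 1/Tm^3)))
    ((1/a) * (1/Tp^3 - 1/Tm^3) - (-6*c2/c1^4)
      - ((-20*c2^3 - 6*c1^2*c4 + 24*c1*c2*c3)/c1^6) * a^2)
  have tri2 := abs_sub ((1/a) * (1/Dp^3 - 1/Tp^3)) ((1/a) * (1/Dm^3 - 1/Tm^3))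
  have hCa : (13824*m₂^3/m₁^6 + 64*CQ/m₁^12) * a^4
      = 6912*m₂^3/m₁^6 * a^4 + 6912*m₂^3/m₁^6 * a^4 + 64*CQ/m₁^12 * a^4 := by ring
  rw [hCa]
  linarith

/-- Expansion of the broken-bond elastic term: for `C⁶` step-location
functions `φ` with `φ′ ≤ −m₁ < 0` and `|φ^{(k)}| ≤ m₂` (`1 ≤ k ≤ 6`), uniformly in `α` and in
`a ∈ (0, a₀]`,
`a²(1/(φ(α−a)−φ(α))³ − 1/(φ(α)−φ(α+a))³) = −3φ″(α)/φ′(α)⁴ + v₃(α)·a² + O(a⁴)`,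
with `a₀, C` depending only on `m₁, m₂`. -/
theorem stmt_14 (m₁ m₂ : ℝ) (hm₁ : 0 < m₁) (hm₂ : 0 < m₂) :
    ∃ a₀ C : ℝ, 0 < a₀ ∧ 0 < C ∧
      ∀ φ : ℝ → ℝ, ContDiff ℝ 6 φ →
        (∀ α : ℝ, deriv φ α ≤ -m₁) →
        (∀ k : ℕ, 1 ≤ k → k ≤ 6 → ∀ α : ℝ, |iteratedDeriv k φ α| ≤ m₂) →
        ∀ α a : ℝ, 0 < a → a ≤ a₀ →
          |a ^ 2 * (1 / (φ (α - a) - φ α) ^ 3 - 1 / (φ α - φ (α + a)) ^ 3)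
              - (-3 * iteratedDeriv 2 φ α / (deriv φ α) ^ 4)
              - v3coef φ α * a ^ 2|
            ≤ C * a ^ 4 := by
  obtain ⟨CQ, hCQ0, hQb⟩ := Qpoly_bound m₂
  refine ⟨min 1 (m₁ / (12 * (m₂ + 1))), 13824*m₂^3/m₁^6 + 64*CQ/m₁^12,
    lt_min one_pos (by positivity), by positivity, ?_⟩
  intro φ hφ hd hk α a ha ha0
  have ha1 : a ≤ 1 := le_trans ha0 (min_le_left _ _)
  have haA : a ≤ m₁ / (12 * (m₂ + 1)) := le_trans ha0 (min_le_right _ _)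
  have hd6 : ∀ x, |iteratedDeriv 6 φ x| ≤ m₂ := fun x => hk 6 (by norm_num) (by norm_num) x
  have hp := taylor6 hφ hd6 α ha
  have hm := taylor6_neg hφ hd6 α ha
  rw [iteratedDeriv_one] at hp hm
  have hb1 : |deriv φ α| ≤ m₂ := by
    have := hk 1 (by norm_num) (by norm_num) α
    rwa [iteratedDeriv_one] at this
  have hb2 : |iteratedDeriv 2 φ α / 2| ≤ m₂ := by
    rw [abs_div, abs_of_pos (by norm_num : (0:ℝ) < 2)]
    have := hk 2 (by norm_num) (by norm_num) α
    linarith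
  have hb3 : |iteratedDeriv 3 φ α / 6| ≤ m₂ := by
    rw [abs_div, abs_of_pos (by norm_num : (0:ℝ) < 6)]
    have := hk 3 (by norm_num) (by norm_num) α
    linarith
  have hb4 : |iteratedDeriv 4 φ α / 24| ≤ m₂ := by
    rw [abs_div, abs_of_pos (by norm_num : (0:ℝ) < 24)]
    have := hk 4 (by norm_num) (by norm_num) α
    linarith
  have hb5 : |iteratedDeriv 5 φ α / 120| ≤ m₂ := by
    rw [abs_div, abs_of_pos (by norm_num : (0:ℝ) < 120)]
    have := hk 5 (by norm_num) (by norm_num) α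
    linarith
  have hu : |(φ (α + a) - φ α) - (deriv φ α * a + (iteratedDeriv 2 φ α / 2)*a^2
      + (iteratedDeriv 3 φ α / 6)*a^3 + (iteratedDeriv 4 φ α / 24)*a^4
      + (iteratedDeriv 5 φ α / 120)*a^5)| ≤ m₂ * a^6 / 120 := by
    have e : (φ (α + a) - φ α) - (deriv φ α * a + (iteratedDeriv 2 φ α / 2)*a^2
        + (iteratedDeriv 3 φ α / 6)*a^3 + (iteratedDeriv 4 φ α / 24)*a^4
        + (iteratedDeriv 5 φ α / 120)*a^5)
        = φ (α + a) - (φ α + deriv φ α * a + iteratedDeriv 2 φ α * a ^ 2 / 2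
        + iteratedDeriv 3 φ α * a ^ 3 / 6 + iteratedDeriv 4 φ α * a ^ 4 / 24
        + iteratedDeriv 5 φ α * a ^ 5 / 120) := by ring
    rw [e]; exact hp
  have hv : |(φ α - φ (α - a)) - (deriv φ α * a - (iteratedDeriv 2 φ α / 2)*a^2
      + (iteratedDeriv 3 φ α / 6)*a^3 - (iteratedDeriv 4 φ α / 24)*a^4
      + (iteratedDeriv 5 φ α / 120)*a^5)| ≤ m₂ * a^6 / 120 := by
    have e : (φ α - φ (α - a)) - (deriv φ α * a - (iteratedDeriv 2 φ α / 2)*a^2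
        + (iteratedDeriv 3 φ α / 6)*a^3 - (iteratedDeriv 4 φ α / 24)*a^4
        + (iteratedDeriv 5 φ α / 120)*a^5)
        = -(φ (α - a) - (φ α - deriv φ α * a + iteratedDeriv 2 φ α * a ^ 2 / 2
        - iteratedDeriv 3 φ α * a ^ 3 / 6 + iteratedDeriv 4 φ α * a ^ 4 / 24
        - iteratedDeriv 5 φ α * a ^ 5 / 120)) := by ring
    rw [e, abs_neg]; exact hm
  have hcore := core hm₁ hm₂ hCQ0 hQb (deriv φ α) (iteratedDeriv 2 φ α / 2)
    (iteratedDeriv 3 φ α / 6) (iteratedDeriv 4 φ α / 24) (iteratedDeriv 5 φ α / 120)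
    (φ (α + a) - φ α) (φ α - φ (α - a)) a
    (hd α) hb1 hb2 hb3 hb4 hb5 ha ha1 haA hu hv
  have hgoal_eq : a ^ 2 * (1 / (φ (α - a) - φ α) ^ 3 - 1 / (φ α - φ (α + a)) ^ 3)
      - (-3 * iteratedDeriv 2 φ α / (deriv φ α) ^ 4) - v3coef φ α * a ^ 2
      = a^2 * (1/(-(φ α - φ (α - a)))^3 - 1/(-(φ (α + a) - φ α))^3)
      - (-6*(iteratedDeriv 2 φ α / 2)/(deriv φ α)^4)
      - ((-20*(iteratedDeriv 2 φ α / 2)^3 - 6*(deriv φ α)^2*(iteratedDeriv 4 φ α / 24)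
          + 24*(deriv φ α)*(iteratedDeriv 2 φ α / 2)*(iteratedDeriv 3 φ α / 6))/(deriv φ α)^6)
        * a^2 := by
    unfold v3coef
    have e1 : φ (α - a) - φ α = -(φ α - φ (α - a)) := by ring
    have e2 : φ α - φ (α + a) = -(φ (α + a) - φ α) := by ring
    rw [e1, e2]
    ring
  rw [hgoal_eq]
  exact hcore
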